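/- For all real numbers λ, μ ≥ 0 with λμ ≤ 1, setting u₁ := 1/√((1+λ²)(1+μ²)) and u₂ := λμ·u₁, one has u₁²·(λ + μ + λ³μ + λμ³ + λ²μ²) ≤ (√2 + 3/2)·√(1 − u₁² − u₂²). -/

import Mathlib

/-!
With `s = λ² + μ²` and `D = (1 + λ²)(1 + μ²) = 1 + s + (λμ)²` one has `u₁² = 1/D` and
`1 - u₁² - u₂² = s/D`, so the claim reads `E ≤ (√2 + 3/2) √(s D)` for the polynomial
`E = (λ + μ) + λμ s + (λμ)²`. Cauchy–Schwarz bounds `λ + μ` by `√2 √s`, and `λμ ≤ 1` together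
with `2|λμ| ≤ s` bounds the rest by `3/2 · s`; finally `√s` and `s` are both at most `√(s D)`
because `1 ≤ D` and `s ≤ D`.
-/

lemma add_le_sqrt_two_mul_sqrt_sq_add_sq (a b : ℝ) : a + b ≤ √2 * √(a ^ 2 + b ^ 2) := by
  rw [← Real.sqrt_mul zero_le_two]
  exact (le_abs_self _).trans (Real.abs_le_sqrt (by nlinarith [sq_nonneg (a - b)]))

lemma mul_mul_sq_add_sq_add_sq_le {a b : ℝ} (hab : a * b ≤ 1) :
    a * b * (a ^ 2 + b ^ 2) + (a * b) ^ 2 ≤ 3 / 2 * (a ^ 2 + b ^ 2) := by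
  nlinarith [sq_nonneg (a - b), sq_nonneg (a + b), mul_self_nonneg (a * b), sq_nonneg (a * b - 1)]

lemma poly_le_sqrt_sq_add_sq_mul_prod_one_add_sq {a b : ℝ} (hab : a * b ≤ 1) :
    a + b + a ^ 3 * b + a * b ^ 3 + a ^ 2 * b ^ 2
      ≤ (√2 + 3 / 2) * √((a ^ 2 + b ^ 2) * ((1 + a ^ 2) * (1 + b ^ 2))) := by
  set s := a ^ 2 + b ^ 2
  set D := (1 + a ^ 2) * (1 + b ^ 2)
  have hs : 0 ≤ s := by positivity
  have hsD : s ≤ D := by nlinarith [sq_nonneg (a * b)]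
  have hD : 1 ≤ D := by nlinarith [sq_nonneg (a * b)]
  have hsqrt : √s ≤ √(s * D) := Real.sqrt_le_sqrt (le_mul_of_one_le_right hs hD)
  have hlin : s ≤ √(s * D) :=
    (Real.le_sqrt hs (by positivity)).2 (by rw [sq]; exact mul_le_mul_of_nonneg_left hsD hs)
  have hsum := add_le_sqrt_two_mul_sqrt_sq_add_sq a b
  have hrest := mul_mul_sq_add_sq_add_sq_le hab
  have hsqrt2 : √2 * √s ≤ √2 * √(s * D) := mul_le_mul_of_nonneg_left hsqrt (Real.sqrt_nonneg 2)
  linear_combination hsum + hrest + hsqrt2 + 3 / 2 * hlin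

theorem stmt_4_general (l m : ℝ) (hlm : l * m ≤ 1)
    (u₁ u₂ : ℝ)
    (hu₁ : u₁ = 1 / Real.sqrt ((1 + l ^ 2) * (1 + m ^ 2)))
    (hu₂ : u₂ = l * m * u₁) :
    u₁ ^ 2 * (l + m + l ^ 3 * m + l * m ^ 3 + l ^ 2 * m ^ 2)
      ≤ (Real.sqrt 2 + 3 / 2) * Real.sqrt (1 - u₁ ^ 2 - u₂ ^ 2) := by
  set D := (1 + l ^ 2) * (1 + m ^ 2)
  have hD : 0 < D := by positivity
  have hu₁sq : u₁ ^ 2 = 1 / D := by rw [hu₁, div_pow, one_pow, Real.sq_sqrt hD.le]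
  have hrest : 1 - u₁ ^ 2 - u₂ ^ 2 = (l ^ 2 + m ^ 2) * D / D ^ 2 := by
    rw [hu₂, mul_pow, hu₁sq]
    field_simp
    ring
  rw [hrest, hu₁sq, Real.sqrt_div' _ (sq_nonneg D), Real.sqrt_sq hD.le, one_div_mul_eq_div,
    mul_div_assoc']
  exact div_le_div_of_nonneg_right (poly_le_sqrt_sq_add_sq_mul_prod_one_add_sq hlm) hD.le

/-- For λ, μ ≥ 0 with λμ ≤ 1, setting u₁ = 1/√((1+λ²)(1+μ²)), u₂ = λμ·u₁,
one has u₁²(λ + μ + λ³μ + λμ³ + λ²μ²) ≤ (√2 + 3/2)√(1 − u₁² − u₂²). -/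
theorem stmt_4 (l m : ℝ) (hl : 0 ≤ l) (hm : 0 ≤ m) (hlm : l * m ≤ 1)
    (u₁ u₂ : ℝ)
    (hu₁ : u₁ = 1 / Real.sqrt ((1 + l ^ 2) * (1 + m ^ 2)))
    (hu₂ : u₂ = l * m * u₁) :
    u₁ ^ 2 * (l + m + l ^ 3 * m + l * m ^ 3 + l ^ 2 * m ^ 2)
      ≤ (Real.sqrt 2 + 3 / 2) * Real.sqrt (1 - u₁ ^ 2 - u₂ ^ 2) :=
  stmt_4_general l m hlm u₁ u₂ hu₁ hu₂
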